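/- Under the hypotheses of the previous statement, if additionally ∫ |v(μ)|²/|μ − λ|² dm(μ) = ∞ (i.e., λ ∈ S_sc), then the strong solution X_λ of the Riccati equation is an unbounded, densely defined, non-closable linear functional on L²(ℝ,m). -/

import Mathlib

/-!
The domain of `X_λ` is a subspace containing every `μⁿ v`: writing `μⁿ / (μ - z)` as a polynomial
in `μ` plus `zⁿ / (μ - z)`, the boundary value at `μⁿ |v|²` reduces to the moments of `|v|²`
(finite, since `m` has compact support) and to the boundary value `a1 - λ` at `|v|²`. By cyclicity
of `v` this subspace is dense.

For `δ > 0` the truncation `w_δ = 1_{|μ - λ| ≥ δ} v / (μ - λ)` lies in `L²`, and since the Cauchy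
kernel stays away from its pole on the support of `w_δ`, dominated convergence gives
`X_λ w_δ = ‖w_δ‖²`. As `∫ |v|² / |μ - λ|² dm = ∞`, `‖w_δ‖ → ∞` when `δ → 0`. So `X_λ` is unbounded,
and `w_δ / ‖w_δ‖²` tends to `0` while `X_λ` maps it to `1`, so `X_λ` is not closable.
-/

open MeasureTheory Filter Topology Complex

open scoped ComplexConjugate

/-- In the paper's notation, `X_λ φ = L` is `HasCauchyBoundaryValue m (conj v * φ) λ L`: the
Cauchy transform `z ↦ ∫ f μ / (μ - z) dm(μ)` tends to `L` as `z = λ + iε → λ`, `ε > 0`. -/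
def HasCauchyBoundaryValue (m : Measure ℝ) (f : ℝ → ℂ) (lam : ℝ) (L : ℂ) : Prop :=
  Tendsto (fun ε : ℝ => ∫ μ, f μ / ((μ : ℂ) - lam - ε * I) ∂m) (𝓝[>] 0) (𝓝 L)

lemma abs_le_norm_sub_sub_ofReal_mul_I (μ lam ε : ℝ) : |ε| ≤ ‖(μ : ℂ) - lam - ε * I‖ := by
  simpa using Complex.abs_im_le_norm ((μ : ℂ) - lam - ε * I)

lemma abs_sub_le_norm_sub_sub_ofReal_mul_I (μ lam ε : ℝ) :
    |μ - lam| ≤ ‖(μ : ℂ) - lam - ε * I‖ := by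
  simpa using Complex.abs_re_le_norm ((μ : ℂ) - lam - ε * I)

section CauchyTransform

variable {m : Measure ℝ} {f g : ℝ → ℂ} {lam : ℝ} {L L' : ℂ}

lemma MeasureTheory.Integrable.div_sub_sub_ofReal_mul_I (hf : Integrable f m) {ε : ℝ}
    (hε : ε ≠ 0) :
    Integrable (fun μ => f μ / ((μ : ℂ) - lam - ε * I)) m := by
  have hbound : ∀ μ : ℝ, ‖((μ : ℂ) - lam - ε * I)⁻¹‖ ≤ |ε|⁻¹ := fun μ => by
    rw [norm_inv]
    exact inv_anti₀ (abs_pos.2 hε) (abs_le_norm_sub_sub_ofReal_mul_I μ lam ε)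
  simpa only [div_eq_inv_mul] using hf.bdd_mul (by fun_prop) (ae_of_all _ hbound)

namespace HasCauchyBoundaryValue

lemma congr_ae (h : HasCauchyBoundaryValue m f lam L) (hfg : f =ᵐ[m] g) :
    HasCauchyBoundaryValue m g lam L :=
  h.congr fun ε => integral_congr_ae (hfg.mono fun μ hμ => by simp only [hμ])

lemma const_mul (h : HasCauchyBoundaryValue m f lam L) (c : ℂ) :
    HasCauchyBoundaryValue m (fun μ => c * f μ) lam (c * L) :=
  (Filter.Tendsto.const_mul c h).congr fun ε => by
    simp only [← integral_const_mul, mul_div_assoc]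

lemma add (hf : Integrable f m) (hg : Integrable g m) (hfL : HasCauchyBoundaryValue m f lam L)
    (hgL : HasCauchyBoundaryValue m g lam L') :
    HasCauchyBoundaryValue m (fun μ => f μ + g μ) lam (L + L') := by
  refine (Filter.Tendsto.add hfL hgL).congr' ?_
  filter_upwards [self_mem_nhdsWithin] with ε (hε : 0 < ε)
  rw [← integral_add (hf.div_sub_sub_ofReal_mul_I hε.ne') (hg.div_sub_sub_ofReal_mul_I hε.ne')]
  simp only [add_div]

lemma zero : HasCauchyBoundaryValue m 0 lam 0 := by
  simp [HasCauchyBoundaryValue]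

end HasCauchyBoundaryValue

lemma hasCauchyBoundaryValue_of_support_subset (hf : Integrable f m)
    {δ : ℝ} (hδ : 0 < δ) (hsupp : Function.support f ⊆ {μ | δ ≤ |μ - lam|}) :
    HasCauchyBoundaryValue m f lam (∫ μ, f μ / ((μ : ℂ) - lam) ∂m) := by
  have hbound : ∀ (ε : ℝ) μ, ‖f μ / ((μ : ℂ) - lam - ε * I)‖ ≤ ‖f μ‖ / δ := fun ε μ => by
    by_cases hμ : f μ = 0
    · simp [hμ]
    rw [norm_div]
    exact div_le_div_of_nonneg_left (norm_nonneg _) hδ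
      ((hsupp hμ).trans (abs_sub_le_norm_sub_sub_ofReal_mul_I μ lam ε))
  have hlim : ∀ μ, Tendsto (fun ε : ℝ => f μ / ((μ : ℂ) - lam - ε * I)) (𝓝[>] 0)
      (𝓝 (f μ / ((μ : ℂ) - lam))) := fun μ => by
    by_cases hμ : f μ = 0
    · simp [hμ]
    have hne : (μ : ℂ) - lam ≠ 0 := by
      rw [← Complex.ofReal_sub, Complex.ofReal_ne_zero, ← abs_pos]
      exact hδ.trans_le (hsupp hμ)
    have hden : Tendsto (fun ε : ℝ => (μ : ℂ) - lam - ε * I) (𝓝[>] 0) (𝓝 ((μ : ℂ) - lam)) := by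
      have hcont : Continuous fun ε : ℝ => (μ : ℂ) - lam - ε * I := by fun_prop
      simpa using tendsto_nhdsWithin_of_tendsto_nhds (hcont.tendsto 0)
    exact tendsto_const_nhds.div hden hne
  refine tendsto_integral_filter_of_dominated_convergence (fun μ => ‖f μ‖ / δ) ?_ ?_
    (hf.norm.div_const δ) (ae_of_all _ hlim)
  · exact Eventually.of_forall fun ε =>
      (hf.aemeasurable.div (by fun_prop)).aestronglyMeasurable
  · exact Eventually.of_forall fun ε => ae_of_all _ (hbound ε)

end CauchyTransform

lemma pow_mul_div_sub_eq {𝕜 : Type*} [Field 𝕜] {x z : 𝕜} (hxz : x - z ≠ 0) (a : 𝕜) (n : ℕ) :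
    x ^ n * a / (x - z) =
      ∑ i ∈ Finset.range n, z ^ (n - 1 - i) * (x ^ i * a) + z ^ n * (a / (x - z)) := by
  have hpow : x ^ n = (∑ i ∈ Finset.range n, x ^ i * z ^ (n - 1 - i)) * (x - z) + z ^ n := by
    rw [geom_sum₂_mul]; ring
  rw [div_eq_iff hxz, add_mul, mul_assoc (z ^ n), div_mul_cancel₀ _ hxz, hpow, add_mul,
    Finset.sum_mul, Finset.sum_mul, Finset.sum_mul]
  congr 1
  exact Finset.sum_congr rfl fun i _ => by ring

section Moments

variable {m : Measure ℝ} {f : ℝ → ℂ} {lam : ℝ} {L : ℂ}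

lemma integrable_pow_mul_of_ae_mem_compact (hf : Integrable f m) {K : Set ℝ} (hK : IsCompact K)
    (hmK : m Kᶜ = 0) (n : ℕ) : Integrable (fun μ : ℝ => (μ : ℂ) ^ n * f μ) m := by
  obtain ⟨R, hR⟩ := hK.isBounded.exists_norm_le
  have hbound : ∀ᵐ μ : ℝ ∂m, ‖(μ : ℂ) ^ n‖ ≤ R ^ n := by
    filter_upwards [mem_ae_iff.2 hmK] with μ hμ
    simpa using pow_le_pow_left₀ (norm_nonneg μ) (hR μ hμ) n
  exact hf.bdd_mul (by fun_prop) hbound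

lemma HasCauchyBoundaryValue.pow_mul
    (hmom : ∀ i, Integrable (fun μ : ℝ => (μ : ℂ) ^ i * f μ) m)
    (h : HasCauchyBoundaryValue m f lam L) (n : ℕ) :
    HasCauchyBoundaryValue m (fun μ : ℝ => (μ : ℂ) ^ n * f μ) lam
      (∑ i ∈ Finset.range n, (lam : ℂ) ^ (n - 1 - i) * ∫ μ, (μ : ℂ) ^ i * f μ ∂m
        + (lam : ℂ) ^ n * L) := by
  have hf : Integrable f m := by simpa using hmom 0
  have hz : Tendsto (fun ε : ℝ => (lam : ℂ) + ε * I) (𝓝[>] 0) (𝓝 (lam : ℂ)) := by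
    have hcont : Continuous fun ε : ℝ => (lam : ℂ) + ε * I := by fun_prop
    simpa using tendsto_nhdsWithin_of_tendsto_nhds (hcont.tendsto 0)
  refine ((tendsto_finsetSum _ fun i _ => (hz.pow _).mul_const _).add
    ((hz.pow n).mul h)).congr' ?_
  filter_upwards [self_mem_nhdsWithin] with ε (hε : 0 < ε)
  have hden : ∀ μ : ℝ, (μ : ℂ) - lam - ε * I = μ - (lam + ε * I) := fun μ => by ring
  have hne : ∀ μ : ℝ, (μ : ℂ) - (lam + ε * I) ≠ 0 := fun μ h => by
    simpa [hε.ne'] using congrArg Complex.im h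
  have hquot : Integrable (fun μ : ℝ => f μ / ((μ : ℂ) - (lam + ε * I))) m := by
    simpa only [hden] using hf.div_sub_sub_ofReal_mul_I (lam := lam) hε.ne'
  simp only [hden, pow_mul_div_sub_eq (hne _)]
  rw [integral_add (integrable_finsetSum _ fun i _ => (hmom i).const_mul _) (hquot.const_mul _),
    integral_finsetSum _ fun i _ => (hmom i).const_mul _]
  simp only [integral_const_mul]

end Moments

section Domain

variable {m : Measure ℝ} {v : ℝ → ℂ} {lam : ℝ}

lemma integrable_conj_mul_Lp (hv : MemLp v 2 m) (φ : Lp ℂ 2 m) :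
    Integrable (fun μ => conj (v μ) * φ μ) m :=
  hv.star.integrable_mul (Lp.memLp φ)

lemma HasCauchyBoundaryValue.conj_mul_smul {φ : Lp ℂ 2 m} {L : ℂ}
    (h : HasCauchyBoundaryValue m (fun μ => conj (v μ) * φ μ) lam L) (c : ℂ) :
    HasCauchyBoundaryValue m (fun μ => conj (v μ) * (c • φ) μ) lam (c * L) :=
  (h.const_mul c).congr_ae <| (Lp.coeFn_smul c φ).mono fun μ hμ => by
    simp only [hμ, Pi.smul_apply, smul_eq_mul]; ring

def cauchyPairingDomain (hv : MemLp v 2 m) (lam : ℝ) : Submodule ℂ (Lp ℂ 2 m) where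
  carrier := {φ | ∃ L, HasCauchyBoundaryValue m (fun μ => conj (v μ) * φ μ) lam L}
  add_mem' := by
    rintro φ ψ ⟨L, hφ⟩ ⟨L', hψ⟩
    refine ⟨L + L',
      (hφ.add (integrable_conj_mul_Lp hv φ) (integrable_conj_mul_Lp hv ψ) hψ).congr_ae ?_⟩
    filter_upwards [Lp.coeFn_add φ ψ] with μ hμ
    rw [hμ, Pi.add_apply, mul_add]
  zero_mem' := ⟨0, HasCauchyBoundaryValue.zero.congr_ae <|
    (Lp.coeFn_zero ℂ 2 m).mono fun μ hμ => by simp only [Pi.zero_apply, hμ, mul_zero]⟩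
  smul_mem' := fun c _ ⟨L, hφ⟩ => ⟨c * L, hφ.conj_mul_smul c⟩

lemma pow_mul_mem_cauchyPairingDomain (hv : MemLp v 2 m) {K : Set ℝ} (hK : IsCompact K)
    (hmK : m Kᶜ = 0) {L : ℂ} (hL : HasCauchyBoundaryValue m (fun μ => (‖v μ‖ : ℂ) ^ 2) lam L)
    {φ : Lp ℂ 2 m} {n : ℕ} (hφ : ∀ᵐ μ ∂m, φ μ = (μ : ℂ) ^ n * v μ) :
    φ ∈ cauchyPairingDomain hv lam := by
  have hv2 : Integrable (fun μ => (‖v μ‖ : ℂ) ^ 2) m :=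
    (hv.star.integrable_mul hv).congr (ae_of_all _ fun μ => Complex.conj_mul' (v μ))
  refine ⟨_, (hL.pow_mul (integrable_pow_mul_of_ae_mem_compact hv2 hK hmK) n).congr_ae ?_⟩
  filter_upwards [hφ] with μ hμ
  rw [hμ, ← Complex.conj_mul']
  ring

lemma dense_cauchyPairingDomain (hv : MemLp v 2 m) {K : Set ℝ} (hK : IsCompact K)
    (hmK : m Kᶜ = 0) {L : ℂ} (hL : HasCauchyBoundaryValue m (fun μ => (‖v μ‖ : ℂ) ^ 2) lam L)
    (hcyc : Dense ((Submodule.span ℂ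
      {f : Lp ℂ 2 m | ∃ n : ℕ, ∀ᵐ μ ∂m, f μ = (μ : ℂ) ^ n * v μ}) : Set (Lp ℂ 2 m))) :
    Dense (cauchyPairingDomain hv lam : Set (Lp ℂ 2 m)) :=
  hcyc.mono <| Submodule.span_le.2 <| by
    rintro φ ⟨n, hφ⟩
    exact pow_mul_mem_cauchyPairingDomain hv hK hmK hL hφ

end Domain

section Truncation

variable {m : Measure ℝ} {v : ℝ → ℂ} {lam δ : ℝ}

lemma measurableSet_le_abs_sub (lam δ : ℝ) : MeasurableSet {μ : ℝ | δ ≤ |μ - lam|} :=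
  measurableSet_le measurable_const (by fun_prop)

lemma exists_lt_setIntegral_of_not_integrable [IsFiniteMeasure m] {g : ℝ → ℝ} (hg0 : 0 ≤ g)
    (hgi : ∀ δ > 0, IntegrableOn g {μ | δ ≤ |μ - lam|} m) (hg : ¬ Integrable g m) (C : ℝ) :
    ∃ δ > 0, C < ∫ μ in {μ | δ ≤ |μ - lam|}, g μ ∂m := by
  by_contra! hC
  set s : ℕ → Set ℝ := fun n => {μ | 1 / ((n : ℝ) + 1) ≤ |μ - lam|}
  have hpos : ∀ n : ℕ, (0 : ℝ) < 1 / ((n : ℝ) + 1) := fun n => by positivity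
  have hle : ∀ n, (m.restrict {lam}ᶜ).restrict (s n) ≤ m.restrict (s n) := fun n =>
    Measure.restrict_mono subset_rfl Measure.restrict_le_self
  have hcover : AECover (m.restrict {lam}ᶜ) atTop s := by
    refine ⟨(ae_restrict_iff' (measurableSet_singleton lam).compl).2 (ae_of_all _ fun μ hμ => ?_),
      fun n => measurableSet_le_abs_sub lam _⟩
    have hμ' : 0 < |μ - lam| := abs_pos.2 (sub_ne_zero.2 hμ)
    exact tendsto_one_div_add_atTop_nhds_zero_nat.eventually (eventually_le_nhds hμ')
  have hoff : IntegrableOn g {lam}ᶜ m :=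
    hcover.integrable_of_integral_bounded_of_nonneg_ae C
      (fun n => Integrable.mono_measure (hgi _ (hpos n)) (hle n)) (ae_of_all _ hg0)
      (Eventually.of_forall fun n => (integral_mono_measure (hle n) (ae_of_all _ hg0)
        (hgi _ (hpos n))).trans (hC _ (hpos n)))
  -- the sets `s n` exhaust only `{λ}ᶜ`; the possible atom at `λ` is harmless as `m` is finite
  have hat : IntegrableOn g {lam} m := by
    rw [integrableOn_singleton_iff]
    exact Or.inr (measure_lt_top _ _)
  rw [← integrableOn_univ, ← Set.compl_union_self {lam}] at hg
  exact hg (hoff.union hat)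

noncomputable def truncatedDiv (v : ℝ → ℂ) (lam δ : ℝ) : ℝ → ℂ :=
  {μ | δ ≤ |μ - lam|}.indicator fun μ => v μ / ((μ : ℂ) - lam)

lemma norm_truncatedDiv_le (hδ : 0 < δ) (μ : ℝ) : ‖truncatedDiv v lam δ μ‖ ≤ δ⁻¹ * ‖v μ‖ := by
  by_cases hμ : μ ∈ {μ : ℝ | δ ≤ |μ - lam|}
  · rw [truncatedDiv, Set.indicator_of_mem hμ, norm_div, div_eq_inv_mul, ← Complex.ofReal_sub,
      Complex.norm_real, Real.norm_eq_abs]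
    exact mul_le_mul_of_nonneg_right (inv_anti₀ hδ hμ) (norm_nonneg _)
  · rw [truncatedDiv, Set.indicator_of_notMem hμ, norm_zero]
    positivity

lemma memLp_truncatedDiv (hv : MemLp v 2 m) (hδ : 0 < δ) : MemLp (truncatedDiv v lam δ) 2 m :=
  hv.of_le_mul (((hv.aestronglyMeasurable.aemeasurable.div (by fun_prop)).aestronglyMeasurable
    ).indicator (measurableSet_le_abs_sub lam δ)) (ae_of_all _ (norm_truncatedDiv_le hδ))

lemma norm_truncatedDiv_sq (μ : ℝ) :
    ‖truncatedDiv v lam δ μ‖ ^ 2 =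
      {μ | δ ≤ |μ - lam|}.indicator (fun μ => ‖v μ‖ ^ 2 / |μ - lam| ^ 2) μ := by
  by_cases hμ : μ ∈ {μ : ℝ | δ ≤ |μ - lam|}
  · rw [truncatedDiv, Set.indicator_of_mem hμ, Set.indicator_of_mem hμ, norm_div, div_pow,
      ← Complex.ofReal_sub, Complex.norm_real, Real.norm_eq_abs]
  · rw [truncatedDiv, Set.indicator_of_notMem hμ, Set.indicator_of_notMem hμ, norm_zero,
      zero_pow two_ne_zero]

/-- Holds because `μ - λ` is real. -/
lemma conj_mul_truncatedDiv_div (μ : ℝ) :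
    conj (v μ) * truncatedDiv v lam δ μ / ((μ : ℂ) - lam) =
      conj (truncatedDiv v lam δ μ) * truncatedDiv v lam δ μ := by
  by_cases hμ : μ ∈ {μ : ℝ | δ ≤ |μ - lam|}
  · rw [truncatedDiv, Set.indicator_of_mem hμ, map_div₀, map_sub, Complex.conj_ofReal,
      Complex.conj_ofReal]
    ring
  · rw [truncatedDiv, Set.indicator_of_notMem hμ, map_zero, mul_zero, zero_div, mul_zero]

lemma hasCauchyBoundaryValue_conj_mul_truncatedDiv (hv : MemLp v 2 m) (hδ : 0 < δ) :
    HasCauchyBoundaryValue m (fun μ => conj (v μ) * truncatedDiv v lam δ μ) lam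
      (∫ μ, conj (truncatedDiv v lam δ μ) * truncatedDiv v lam δ μ ∂m) := by
  have hsupp : Function.support (fun μ => conj (v μ) * truncatedDiv v lam δ μ) ⊆
      {μ | δ ≤ |μ - lam|} :=
    (Function.support_mul_subset_right _ _).trans Set.support_indicator_subset
  have hint : Integrable (fun μ => conj (v μ) * truncatedDiv v lam δ μ) m :=
    hv.star.integrable_mul (memLp_truncatedDiv hv hδ)
  simpa only [conj_mul_truncatedDiv_div] using
    hasCauchyBoundaryValue_of_support_subset hint hδ hsupp

end Truncation

lemma MeasureTheory.MemLp.sq_norm_toLp {α : Type*} [MeasurableSpace α] {m : Measure α}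
    {f : α → ℂ} (hf : MemLp f 2 m) :
    (‖hf.toLp f‖ : ℂ) ^ 2 = ∫ a, conj (f a) * f a ∂m := by
  have h : inner ℂ (hf.toLp f) (hf.toLp f) = (‖hf.toLp f‖ : ℂ) ^ 2 := by simp
  rw [← h, L2.inner_def]
  refine integral_congr_ae ?_
  filter_upwards [hf.coeFn_toLp] with a ha
  rw [RCLike.inner_apply', ha]

section Unbounded

variable {m : Measure ℝ} {v : ℝ → ℂ} {lam δ : ℝ}

lemma norm_toLp_truncatedDiv_sq (hv : MemLp v 2 m) (hδ : 0 < δ) :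
    ‖(memLp_truncatedDiv (lam := lam) hv hδ).toLp _‖ ^ 2 =
      ∫ μ in {μ | δ ≤ |μ - lam|}, ‖v μ‖ ^ 2 / |μ - lam| ^ 2 ∂m := by
  have h := (memLp_truncatedDiv (lam := lam) hv hδ).sq_norm_toLp
  simp only [Complex.conj_mul', ← Complex.ofReal_pow, norm_truncatedDiv_sq] at h
  rw [← integral_indicator (measurableSet_le_abs_sub lam δ)]
  exact_mod_cast h

variable [IsFiniteMeasure m]

lemma exists_lt_norm_hasCauchyBoundaryValue_norm_sq (hv : MemLp v 2 m)
    (hinf : ¬ Integrable (fun μ => ‖v μ‖ ^ 2 / |μ - lam| ^ 2) m) (C : ℝ) :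
    ∃ φ : Lp ℂ 2 m, C < ‖φ‖ ∧
      HasCauchyBoundaryValue m (fun μ => conj (v μ) * φ μ) lam ((‖φ‖ : ℂ) ^ 2) := by
  have hgi : ∀ δ > 0, IntegrableOn (fun μ => ‖v μ‖ ^ 2 / |μ - lam| ^ 2) {μ | δ ≤ |μ - lam|} m :=
    fun δ hδ => by
      rw [← integrable_indicator_iff (measurableSet_le_abs_sub lam δ)]
      simpa only [norm_truncatedDiv_sq] using
        (memLp_truncatedDiv (lam := lam) hv hδ).norm.integrable_sq
  obtain ⟨δ, hδ, hC⟩ :=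
    exists_lt_setIntegral_of_not_integrable (fun μ => by positivity) hgi hinf (C ^ 2)
  have hw := memLp_truncatedDiv (lam := lam) hv hδ
  rw [← norm_toLp_truncatedDiv_sq hv hδ] at hC
  refine ⟨hw.toLp _, (le_abs_self C).trans_lt (abs_lt_of_sq_lt_sq hC (norm_nonneg _)), ?_⟩
  rw [hw.sq_norm_toLp]
  exact (hasCauchyBoundaryValue_conj_mul_truncatedDiv hv hδ).congr_ae
    (hw.coeFn_toLp.mono fun μ hμ => by simp only [hμ])

lemma exists_tendsto_zero_hasCauchyBoundaryValue_one (hv : MemLp v 2 m)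
    (hinf : ¬ Integrable (fun μ => ‖v μ‖ ^ 2 / |μ - lam| ^ 2) m) :
    ∃ u : ℕ → Lp ℂ 2 m, (∀ n, HasCauchyBoundaryValue m (fun μ => conj (v μ) * u n μ) lam 1) ∧
      Tendsto u atTop (𝓝 0) := by
  choose φ hφ hXφ using fun n : ℕ => exists_lt_norm_hasCauchyBoundaryValue_norm_sq hv hinf
    ((n : ℝ) + 1)
  have hpos : ∀ n, 0 < ‖φ n‖ := fun n => lt_trans (by positivity) (hφ n)
  refine ⟨fun n => ((‖φ n‖ : ℂ) ^ 2)⁻¹ • φ n, fun n => ?_, ?_⟩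
  · have h := (hXφ n).conj_mul_smul ((‖φ n‖ : ℂ) ^ 2)⁻¹
    rwa [inv_mul_cancel₀ (by exact_mod_cast (pow_pos (hpos n) 2).ne')] at h
  · rw [tendsto_zero_iff_norm_tendsto_zero]
    refine squeeze_zero (fun n => norm_nonneg _) (fun n => ?_)
      tendsto_one_div_add_atTop_nhds_zero_nat
    rw [norm_smul, norm_inv, norm_pow, Complex.norm_real, norm_norm, one_div]
    calc (‖φ n‖ ^ 2)⁻¹ * ‖φ n‖ = ‖φ n‖⁻¹ := by field_simp
      _ ≤ ((n : ℝ) + 1)⁻¹ := inv_anti₀ (by positivity) (hφ n).le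

end Unbounded

/-- Under the hypotheses of Statement 14 (boundary value `a1 - λ` existing
finitely, `v` cyclic for multiplication by the independent variable), if in addition
`∫ |v(μ)|²/|μ - λ|² dm(μ) = ∞` (i.e. `λ ∈ S_sc`), then the strong solution `X_λ` of the
Riccati equation is a densely defined, unbounded, non-closable linear functional on
`L²(ℝ,m)`. -/
theorem X_lambda_unbounded_densely_defined_nonclosable
    (m : Measure ℝ) [IsFiniteMeasure m]
    (K : Set ℝ) (hK : IsCompact K) (hmK : m Kᶜ = 0)
    (v : ℝ → ℂ) (hv : MemLp v 2 m) (a1 lam : ℝ)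
    (hcyc : Dense ((Submodule.span ℂ
      {f : Lp ℂ 2 m | ∃ n : ℕ, ∀ᵐ μ ∂m, f μ = (μ : ℂ) ^ n * v μ} : Submodule ℂ (Lp ℂ 2 m))
        : Set (Lp ℂ 2 m)))
    (hlim : Tendsto
      (fun ε : ℝ => ∫ μ, (‖v μ‖ ^ 2 : ℂ) / ((μ : ℂ) - (lam : ℂ) - ε * I) ∂m)
      (𝓝[>] 0) (𝓝 ((a1 : ℂ) - (lam : ℂ))))
    (hinf : ¬ Integrable (fun μ : ℝ => ‖v μ‖ ^ 2 / |μ - lam| ^ 2) m) :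
    -- `X_λ` is densely defined, ...
    Dense {φ : Lp ℂ 2 m | ∃ L : ℂ, Tendsto
      (fun ε : ℝ => ∫ μ, (starRingEnd ℂ) (v μ) * φ μ / ((μ : ℂ) - (lam : ℂ) - ε * I) ∂m)
      (𝓝[>] 0) (𝓝 L)} ∧
    -- ... unbounded, ...
    (¬ ∃ C : ℝ, ∀ (φ : Lp ℂ 2 m) (L : ℂ),
      Tendsto
        (fun ε : ℝ => ∫ μ, (starRingEnd ℂ) (v μ) * φ μ / ((μ : ℂ) - (lam : ℂ) - ε * I) ∂m)
        (𝓝[>] 0) (𝓝 L) →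
      ‖L‖ ≤ C * ‖φ‖) ∧
    -- ... and non-closable:
    ∃ (u : ℕ → Lp ℂ 2 m) (L : ℕ → ℂ) (c : ℂ), c ≠ 0 ∧
      (∀ n, Tendsto
        (fun ε : ℝ => ∫ μ, (starRingEnd ℂ) (v μ) * (u n) μ / ((μ : ℂ) - (lam : ℂ) - ε * I) ∂m)
        (𝓝[>] 0) (𝓝 (L n))) ∧
      Tendsto u atTop (𝓝 0) ∧ Tendsto L atTop (𝓝 c) := by
  refine ⟨dense_cauchyPairingDomain hv hK hmK hlim hcyc, ?_, ?_⟩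
  · rintro ⟨C, hC⟩
    obtain ⟨φ, hφ, hXφ⟩ := exists_lt_norm_hasCauchyBoundaryValue_norm_sq hv hinf |C|
    have hbound := hC φ _ hXφ
    rw [norm_pow, Complex.norm_real, norm_norm] at hbound
    nlinarith [abs_nonneg C, le_abs_self C]
  · obtain ⟨u, hu, hu0⟩ := exists_tendsto_zero_hasCauchyBoundaryValue_one hv hinf
    exact ⟨u, fun _ => 1, 1, one_ne_zero, hu, hu0, tendsto_const_nhds⟩
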